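/- Let T be a finite tree with a designated root, let u_e > 0 and w_e > 0 be two families of strictly positive edge weights, let K_u and K_w be the corresponding path-sum matrices, and let Σ be a (not necessarily symmetric) matrix indexed by the non-root vertices with all entries strictly positive. Then for any two distinct non-root vertices a and b such that a is a descendant of b: (K_u Σ K_w)(a,a) > (K_u Σ K_w)(b,b). -/

import Mathlib

open Classical

/-- A finite tree with a designated root vertex (the slack bus). -/
structure GridTree (V : Type*) [Fintype V] [DecidableEq V] where
  graph : SimpleGraph V
  root : V
  isTree : graph.IsTree

namespace GridTree

variable {V : Type*} [Fintype V] [DecidableEq V] (T : GridTree V)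

/-- The unique path (as a walk) from a vertex to the root. -/
noncomputable def pathToRoot (a : V) : T.graph.Walk a T.root :=
  (T.isTree.existsUnique_path a T.root).choose

/-- `E_a`: the set of edges on the unique path from `a` to the root. -/
noncomputable def pathEdges (a : V) : Finset (Sym2 V) :=
  (T.pathToRoot a).edges.toFinset

/-- `c` is a descendant of `a`: `a` lies on the unique path from `c` to the root
(in particular every vertex is a descendant of itself). -/
def Descendant (c a : V) : Prop := a ∈ (T.pathToRoot c).support

/-- `b` is the parent of `a`: the edge `{a, b}` lies on the path from `a` to the root
(equivalently, `b` is the unique neighbor of `a` on that path). -/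
noncomputable def IsParent (a b : V) : Prop := s(a, b) ∈ T.pathEdges a

/-- The path-sum matrix `K_w`, indexed by the non-root vertices:
`K_w(a,b) = ∑_{e ∈ E_a ∩ E_b} w_e`. -/
noncomputable def pathMatrix (w : Sym2 V → ℝ) :
    Matrix {v : V // v ≠ T.root} {v : V // v ≠ T.root} ℝ :=
  fun a b => ∑ e ∈ T.pathEdges a.1 ∩ T.pathEdges b.1, w e

/-- The reduced weighted graph Laplacian with edge weights `w`, indexed by the
non-root vertices (the row and column of the root are deleted). -/
noncomputable def lap (w : Sym2 V → ℝ) :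
    Matrix {v : V // v ≠ T.root} {v : V // v ≠ T.root} ℝ :=
  fun a b =>
    if a = b then ∑ c ∈ Finset.univ.filter (fun c => T.graph.Adj a.1 c), w s(a.1, c)
    else if T.graph.Adj a.1 b.1 then - w s(a.1, b.1) else 0

end GridTree

/-!
If `a` is a strict descendant of `b`, the path from `a` to the root runs through `b`, so
`E_b ⊊ E_a`. Hence, for positive weights, the row and column of `K` at `b` are entrywise
dominated by those at `a`, and strictly so at `K(b,a) = ∑_{E_b} < ∑_{E_a} = K(a,a)`. Expanding
`(K_u Σ K_w)(x,x) = ∑_{i,j} K_u(x,i) Σ(i,j) K_w(j,x)`, every term grows from `x = b` to `x = a`,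
and the term `i = j = a` grows strictly.
-/

open Finset in
theorem Matrix.mul_mul_apply_self_lt {n R : Type*} [Fintype n] [Semiring R] [PartialOrder R]
    [IsStrictOrderedRing R] {A S B : Matrix n n R} {a b : n}
    (hA₀ : ∀ i, 0 ≤ A b i) (hA : ∀ i, A b i ≤ A a i) (hS : ∀ i j, 0 ≤ S i j)
    (hB₀ : ∀ j, 0 ≤ B j b) (hB : ∀ j, B j b ≤ B j a)
    {i₀ j₀ : n} (hA_lt : A b i₀ < A a i₀) (hS_pos : 0 < S i₀ j₀) (hB_pos : 0 < B j₀ a) :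
    (A * S * B) b b < (A * S * B) a a := by
  have hterm_le (i j : n) : A b i * S i j * B j b ≤ A a i * S i j * B j a :=
    calc A b i * S i j * B j b ≤ A b i * S i j * B j a :=
          mul_le_mul_of_nonneg_left (hB j) (mul_nonneg (hA₀ i) (hS i j))
      _ ≤ A a i * S i j * B j a :=
          mul_le_mul_of_nonneg_right (mul_le_mul_of_nonneg_right (hA i) (hS i j))
            ((hB₀ j).trans (hB j))
  have hterm_lt : A b i₀ * S i₀ j₀ * B j₀ b < A a i₀ * S i₀ j₀ * B j₀ a :=
    (mul_le_mul_of_nonneg_left (hB j₀) (mul_nonneg (hA₀ i₀) (hS i₀ j₀))).trans_lt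
      (mul_lt_mul_of_pos_right (mul_lt_mul_of_pos_right hA_lt hS_pos) hB_pos)
  simp only [Matrix.mul_apply, sum_mul]
  exact sum_lt_sum (fun j _ ↦ sum_le_sum fun i _ ↦ hterm_le i j)
    ⟨j₀, mem_univ _, sum_lt_sum (fun i _ ↦ hterm_le i j₀) ⟨i₀, mem_univ _, hterm_lt⟩⟩

theorem SimpleGraph.Walk.exists_mem_edges_of_ne {V : Type*} {G : SimpleGraph V} {u v : V}
    (p : G.Walk u v) (h : u ≠ v) : ∃ e, e ∈ p.edges :=
  List.exists_mem_of_ne_nil _ (edges_eq_nil.not.mpr (not_nil_of_ne h))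

namespace GridTree

open SimpleGraph

variable {V : Type*} [Fintype V] [DecidableEq V] (T : GridTree V)

theorem pathToRoot_isPath (a : V) : (T.pathToRoot a).IsPath :=
  (T.isTree.existsUnique_path a T.root).choose_spec.1

theorem dropUntil_pathToRoot {a b : V} (h : b ∈ (T.pathToRoot a).support) :
    (T.pathToRoot a).dropUntil b h = T.pathToRoot b :=
  (T.isTree.existsUnique_path b T.root).choose_spec.2 _ ((T.pathToRoot_isPath a).dropUntil h)

theorem edges_pathToRoot_eq_append {a b : V} (h : b ∈ (T.pathToRoot a).support) :
    (T.pathToRoot a).edges = ((T.pathToRoot a).takeUntil b h).edges ++ (T.pathToRoot b).edges := by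
  rw [← T.dropUntil_pathToRoot h, ← Walk.edges_append, Walk.take_spec]

theorem mem_edgeSet_of_mem_pathEdges {a : V} {e : Sym2 V} (he : e ∈ T.pathEdges a) :
    e ∈ T.graph.edgeSet :=
  (T.pathToRoot a).edges_subset_edgeSet (List.mem_toFinset.mp he)

theorem pathEdges_nonempty {a : V} (ha : a ≠ T.root) : (T.pathEdges a).Nonempty :=
  let ⟨e, he⟩ := (T.pathToRoot a).exists_mem_edges_of_ne ha
  ⟨e, List.mem_toFinset.mpr he⟩

theorem pathEdges_ssubset_of_descendant {a b : V} (hdesc : T.Descendant a b) (hne : a ≠ b) :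
    T.pathEdges b ⊂ T.pathEdges a := by
  have hsplit := T.edges_pathToRoot_eq_append hdesc
  have hdisj :=
    List.disjoint_of_nodup_append (hsplit ▸ (T.pathToRoot_isPath a).isTrail.edges_nodup)
  obtain ⟨e, he⟩ := ((T.pathToRoot a).takeUntil b hdesc).exists_mem_edges_of_ne hne
  rw [pathEdges, pathEdges, hsplit, List.toFinset_append]
  exact (Finset.ssubset_iff_of_subset Finset.subset_union_right).mpr
    ⟨e, Finset.mem_union_left _ (List.mem_toFinset.mpr he),
      fun he' ↦ hdisj he (List.mem_toFinset.mp he')⟩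

theorem pathMatrix_apply_comm (w : Sym2 V → ℝ) (x y : {v : V // v ≠ T.root}) :
    T.pathMatrix w x y = T.pathMatrix w y x := by
  rw [pathMatrix, pathMatrix, Finset.inter_comm]

section pathMatrix

variable {w : Sym2 V → ℝ}

theorem pathMatrix_nonneg (hw : ∀ e ∈ T.graph.edgeSet, 0 ≤ w e)
    (x y : {v : V // v ≠ T.root}) :
    0 ≤ T.pathMatrix w x y :=
  Finset.sum_nonneg fun _ he ↦ hw _ (T.mem_edgeSet_of_mem_pathEdges (Finset.mem_inter.mp he).1)

theorem pathMatrix_apply_le_of_subset (hw : ∀ e ∈ T.graph.edgeSet, 0 ≤ w e)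
    {a b : {v : V // v ≠ T.root}} (h : T.pathEdges b ⊆ T.pathEdges a)
    (i : {v : V // v ≠ T.root}) :
    T.pathMatrix w b i ≤ T.pathMatrix w a i :=
  Finset.sum_le_sum_of_subset_of_nonneg (Finset.inter_subset_inter_right h) fun _ he _ ↦
    hw _ (T.mem_edgeSet_of_mem_pathEdges (Finset.mem_inter.mp he).1)

theorem pathMatrix_apply_lt_of_ssubset (hw : ∀ e ∈ T.graph.edgeSet, 0 < w e)
    {a b : {v : V // v ≠ T.root}} (h : T.pathEdges b ⊂ T.pathEdges a) :
    T.pathMatrix w b a < T.pathMatrix w a a := by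
  obtain ⟨e, hea, heb⟩ := Finset.exists_of_ssubset h
  rw [pathMatrix, pathMatrix, Finset.inter_eq_left.mpr h.subset, Finset.inter_self]
  exact Finset.sum_lt_sum_of_subset h.subset hea heb (hw _ (T.mem_edgeSet_of_mem_pathEdges hea))
    fun _ he _ ↦ (hw _ (T.mem_edgeSet_of_mem_pathEdges he)).le

theorem pathMatrix_apply_self_pos (hw : ∀ e ∈ T.graph.edgeSet, 0 < w e)
    (a : {v : V // v ≠ T.root}) : 0 < T.pathMatrix w a a := by
  rw [pathMatrix, Finset.inter_self]
  exact Finset.sum_pos (fun _ he ↦ hw _ (T.mem_edgeSet_of_mem_pathEdges he))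
    (T.pathEdges_nonempty a.2)

end pathMatrix

end GridTree

/-- For two families of strictly positive edge weights `u, w` with
path-sum matrices `K_u, K_w`, and a matrix `Σ` (not necessarily symmetric) with all
entries strictly positive, if the non-root vertex `a` is a descendant of the non-root
vertex `b` with `a ≠ b`, then `(K_u Σ K_w)(a,a) > (K_u Σ K_w)(b,b)`. -/
theorem pathMatrix_sandwich_diag_increases_down_tree
    {V : Type*} [Fintype V] [DecidableEq V] (T : GridTree V)
    (u w : Sym2 V → ℝ)
    (hu : ∀ e ∈ T.graph.edgeSet, 0 < u e) (hw : ∀ e ∈ T.graph.edgeSet, 0 < w e)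
    (S : Matrix {v : V // v ≠ T.root} {v : V // v ≠ T.root} ℝ)
    (hpos : ∀ i j, 0 < S i j)
    (a b : {v : V // v ≠ T.root}) (hne : a ≠ b) (hdesc : T.Descendant a.1 b.1) :
    (T.pathMatrix u * S * T.pathMatrix w) a a >
      (T.pathMatrix u * S * T.pathMatrix w) b b := by
  have hE := T.pathEdges_ssubset_of_descendant hdesc (Subtype.coe_ne_coe.mpr hne)
  have hu₀ e he : 0 ≤ u e := (hu e he).le
  have hw₀ e he : 0 ≤ w e := (hw e he).le
  refine Matrix.mul_mul_apply_self_lt (i₀ := a) (j₀ := a)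
    (T.pathMatrix_nonneg hu₀ b) (T.pathMatrix_apply_le_of_subset hu₀ hE.subset)
    (fun i j ↦ (hpos i j).le) (T.pathMatrix_nonneg hw₀ · b) (fun j ↦ ?_)
    (T.pathMatrix_apply_lt_of_ssubset hu hE) (hpos a a) (T.pathMatrix_apply_self_pos hw a)
  rw [T.pathMatrix_apply_comm w j b, T.pathMatrix_apply_comm w j a]
  exact T.pathMatrix_apply_le_of_subset hw₀ hE.subset j
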